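/- Let d ≥ 1 and let ψ be a Muckenhoupt A₂-weight on ℝ^d. Then there exists r₀ ≥ 1 such that ∫_{B_r} ψ dx > 1 for all r ≥ r₀ and ∫_{r₀}^{∞} r / log(∫_{B_r} ψ dx) dr = +∞, where B_r = {x ∈ ℝ^d : ‖x‖ < r}. (The Sturm non-explosion integral test verified in the proof of Proposition 2.3, which yields conservativeness of the associated Dirichlet form.) -/

import Mathlib

/-!
Cauchy–Schwarz gives `μ(S)² ≤ (∫_S ψ) (∫_S ψ⁻¹)`, so the `A₂` bound on a ball `B ⊇ S` yields the
comparison `μ(S)² ∫_B ψ ≤ A μ(B)² ∫_S ψ`. With `S = B₁` and `B = B_r` it bounds `∫_{B_r} ψ` by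
`A r^{2d} ∫_{B₁} ψ`, so `log ∫_{B_r} ψ = O(r)` and `r / log ∫_{B_r} ψ` stays bounded below. With `S`
a ball of radius `r` at distance `2r` from the origin, disjoint from `B_r` and inside `B_{3r}`, it
gives `∫_{B_{3r}} ψ ≥ ∫_{B_r} ψ + (9^d A)⁻¹ ∫_{B₁} ψ` for `r ≥ 1`, so the mass of balls tends to
infinity.
-/

open MeasureTheory Metric

/-- A measurable function `ψ : ℝ^d → ℝ` with `ψ > 0` Lebesgue-a.e. is a Muckenhoupt
`A₂`-weight if there is `A > 0` such that for every open ball `B`,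
`(∫_B ψ) (∫_B ψ⁻¹) ≤ A ⬝ (Leb B)²`. -/
def IsA2Weight (d : ℕ) (ψ : EuclideanSpace ℝ (Fin d) → ℝ) : Prop :=
  Measurable ψ ∧ (∀ᵐ x ∂(volume : Measure (EuclideanSpace ℝ (Fin d))), 0 < ψ x) ∧
  ∃ A : ℝ, 0 < A ∧ ∀ (x : EuclideanSpace ℝ (Fin d)) (r : ℝ), 0 < r →
    (∫⁻ y in ball x r, ENNReal.ofReal (ψ y)) *
      (∫⁻ y in ball x r, ENNReal.ofReal (ψ y)⁻¹) ≤
    ENNReal.ofReal A * (volume (ball x r)) ^ 2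

open Set Filter Module Topology
open scoped ENNReal NNReal

section MeasureSpace

variable {α : Type*} [MeasurableSpace α] {μ : Measure α} {ψ : α → ℝ}

theorem lintegral_ofReal_ne_zero (hψ : AEMeasurable ψ μ) (hpos : ∀ᵐ x ∂μ, 0 < ψ x)
    (hμ : μ ≠ 0) : ∫⁻ x, ENNReal.ofReal (ψ x) ∂μ ≠ 0 := by
  rw [Ne, lintegral_eq_zero_iff' hψ.ennreal_ofReal]
  intro hzero
  have hfalse : ∀ᵐ _ ∂μ, False := by
    filter_upwards [hzero, hpos] with x hx hx_pos
    simp only [Pi.zero_apply, ENNReal.ofReal_eq_zero] at hx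
    linarith
  exact hμ (ae_eq_bot.1 (eventually_false_iff_eq_bot.1 hfalse))

theorem sq_measure_univ_le_lintegral_mul_lintegral_inv (hψ : AEMeasurable ψ μ)
    (hpos : ∀ᵐ x ∂μ, 0 < ψ x) :
    μ univ ^ 2 ≤ (∫⁻ x, ENNReal.ofReal (ψ x) ∂μ) * ∫⁻ x, ENNReal.ofReal (ψ x)⁻¹ ∂μ := by
  set f : α → ℝ≥0∞ := fun x => ENNReal.ofReal (ψ x) ^ (2⁻¹ : ℝ)
  set g : α → ℝ≥0∞ := fun x => ENNReal.ofReal (ψ x)⁻¹ ^ (2⁻¹ : ℝ)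
  have hsq : ∀ a : ℝ≥0∞, (a ^ (2⁻¹ : ℝ)) ^ (2 : ℝ) = a := fun a => by
    rw [← ENNReal.rpow_mul]; norm_num
  have hfg : ∫⁻ x, (f * g) x ∂μ = μ univ := by
    rw [← setLIntegral_one, Measure.restrict_univ]
    refine lintegral_congr_ae ?_
    filter_upwards [hpos] with x hx
    rw [Pi.mul_apply, ← ENNReal.mul_rpow_of_nonneg _ _ (by norm_num), ← ENNReal.ofReal_mul hx.le,
      mul_inv_cancel₀ hx.ne', ENNReal.ofReal_one, ENNReal.one_rpow]
  have holder := ENNReal.lintegral_mul_le_Lp_mul_Lq μ Real.HolderConjugate.two_two (f := f)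
    (g := g) (hψ.ennreal_ofReal.pow_const _) (hψ.inv.ennreal_ofReal.pow_const _)
  simp only [hfg, f, g, hsq, one_div] at holder
  calc μ univ ^ 2 ≤ ((∫⁻ x, ENNReal.ofReal (ψ x) ∂μ) ^ (2⁻¹ : ℝ) *
        (∫⁻ x, ENNReal.ofReal (ψ x)⁻¹ ∂μ) ^ (2⁻¹ : ℝ)) ^ (2 : ℝ) := by
        rw [← ENNReal.rpow_natCast, Nat.cast_ofNat]; gcongr
    _ = _ := by rw [ENNReal.mul_rpow_of_nonneg _ _ (by norm_num), hsq, hsq]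

theorem sq_measure_mul_setLIntegral_le {s t : Set α} (hst : s ⊆ t) (hψ : AEMeasurable ψ μ)
    (hpos : ∀ᵐ x ∂μ, 0 < ψ x) :
    μ s ^ 2 * ∫⁻ x in t, ENNReal.ofReal (ψ x) ∂μ ≤
      (∫⁻ x in t, ENNReal.ofReal (ψ x) ∂μ) * (∫⁻ x in t, ENNReal.ofReal (ψ x)⁻¹ ∂μ) *
        ∫⁻ x in s, ENNReal.ofReal (ψ x) ∂μ := by
  have hcs := sq_measure_univ_le_lintegral_mul_lintegral_inv hψ.restrict
    (ae_restrict_of_ae (s := s) hpos)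
  rw [Measure.restrict_apply_univ] at hcs
  calc μ s ^ 2 * ∫⁻ x in t, ENNReal.ofReal (ψ x) ∂μ
      ≤ (∫⁻ x in s, ENNReal.ofReal (ψ x) ∂μ) * (∫⁻ x in s, ENNReal.ofReal (ψ x)⁻¹ ∂μ) *
          ∫⁻ x in t, ENNReal.ofReal (ψ x) ∂μ := by gcongr
    _ ≤ (∫⁻ x in s, ENNReal.ofReal (ψ x) ∂μ) * (∫⁻ x in t, ENNReal.ofReal (ψ x)⁻¹ ∂μ) *
          ∫⁻ x in t, ENNReal.ofReal (ψ x) ∂μ := by gcongr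
    _ = _ := by ring

end MeasureSpace

section A2Condition

variable {E : Type*} [NormedAddCommGroup E] [MeasurableSpace E]

def A2Condition (μ : Measure E) (C : ℝ≥0) (ψ : E → ℝ) : Prop :=
  ∀ (x : E) (r : ℝ), 0 < r →
    (∫⁻ y in ball x r, ENNReal.ofReal (ψ y) ∂μ) * (∫⁻ y in ball x r, ENNReal.ofReal (ψ y)⁻¹ ∂μ) ≤
      C * μ (ball x r) ^ 2

variable {μ : Measure E} {C : ℝ≥0} {ψ : E → ℝ}

theorem A2Condition.sq_measure_mul_le (h : A2Condition μ C ψ) (hψ : AEMeasurable ψ μ)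
    (hpos : ∀ᵐ x ∂μ, 0 < ψ x) {s : Set E} {x : E} {r : ℝ} (hr : 0 < r) (hs : s ⊆ ball x r) :
    μ s ^ 2 * ∫⁻ y in ball x r, ENNReal.ofReal (ψ y) ∂μ ≤
      C * μ (ball x r) ^ 2 * ∫⁻ y in s, ENNReal.ofReal (ψ y) ∂μ :=
  (sq_measure_mul_setLIntegral_le hs hψ hpos).trans (by gcongr ?_ * _; exact h x r hr)

variable [NormedSpace ℝ E] [FiniteDimensional ℝ E] [μ.IsAddHaarMeasure]

theorem A2Condition.setLIntegral_ball_ne_top (h : A2Condition μ C ψ) (hψ : AEMeasurable ψ μ)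
    (hpos : ∀ᵐ x ∂μ, 0 < ψ x) (x : E) {r : ℝ} (hr : 0 < r) :
    ∫⁻ y in ball x r, ENNReal.ofReal (ψ y) ∂μ ≠ ⊤ := by
  have hball : μ.restrict (ball x r) ≠ 0 := by
    rw [Ne, Measure.restrict_eq_zero]; exact (measure_ball_pos μ x hr).ne'
  have hinv : ∫⁻ y in ball x r, ENNReal.ofReal (ψ y)⁻¹ ∂μ ≠ 0 :=
    lintegral_ofReal_ne_zero hψ.inv.restrict
      (ae_restrict_of_ae (hpos.mono fun _ hy => inv_pos.2 hy)) hball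
  intro htop
  have hbound := h x r hr
  rw [htop, ENNReal.top_mul hinv, top_le_iff] at hbound
  exact ENNReal.mul_ne_top ENNReal.coe_ne_top (ENNReal.pow_ne_top measure_ball_lt_top.ne) hbound

variable [BorelSpace E]

theorem A2Condition.setLIntegral_ball_le_of_subset (h : A2Condition μ C ψ)
    (hψ : AEMeasurable ψ μ) (hpos : ∀ᵐ x ∂μ, 0 < ψ x) {x y : E} {c r : ℝ} (hc : 0 < c)
    (hr : 0 < r) (hsub : ball y r ⊆ ball x (c * r)) :
    ∫⁻ z in ball x (c * r), ENNReal.ofReal (ψ z) ∂μ ≤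
      C * ENNReal.ofReal (c ^ (2 * finrank ℝ E)) * ∫⁻ z in ball y r, ENNReal.ofReal (ψ z) ∂μ := by
  have hvol : μ (ball x (c * r)) = ENNReal.ofReal (c ^ finrank ℝ E) * μ (ball y r) := by
    rw [Measure.addHaar_ball_mul_of_pos μ x hc, Measure.addHaar_ball_center μ y]
  have key := h.sq_measure_mul_le hψ hpos (by positivity) hsub
  rw [hvol, mul_pow, ← ENNReal.ofReal_pow (by positivity), ← pow_mul, mul_comm (finrank ℝ E)] at key
  refine (ENNReal.mul_le_mul_iff_right (pow_ne_zero 2 (measure_ball_pos μ y hr).ne')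
    (ENNReal.pow_ne_top measure_ball_lt_top.ne)).1 ?_
  exact key.trans_eq (by ring)

variable [Nontrivial E]

theorem A2Condition.setLIntegral_ball_add_le (h : A2Condition μ C ψ) (hψ : AEMeasurable ψ μ)
    (hpos : ∀ᵐ x ∂μ, 0 < ψ x) (x : E) {r : ℝ} (hr : 0 < r) :
    (∫⁻ z in ball x r, ENNReal.ofReal (ψ z) ∂μ) +
        (∫⁻ z in ball x (3 * r), ENNReal.ofReal (ψ z) ∂μ) /
          (C * ENNReal.ofReal (3 ^ (2 * finrank ℝ E))) ≤
      ∫⁻ z in ball x (3 * r), ENNReal.ofReal (ψ z) ∂μ := by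
  obtain ⟨v, hv⟩ := exists_norm_eq E (by positivity : 0 ≤ 2 * r)
  have hdist : dist x (x + v) = 2 * r := by rw [dist_self_add_right, hv]
  have hsub : ball (x + v) r ⊆ ball x (3 * r) :=
    ball_subset_ball' (by rw [dist_comm, hdist]; linarith)
  have hsum : (∫⁻ z in ball x r, ENNReal.ofReal (ψ z) ∂μ) +
      ∫⁻ z in ball (x + v) r, ENNReal.ofReal (ψ z) ∂μ ≤
        ∫⁻ z in ball x (3 * r), ENNReal.ofReal (ψ z) ∂μ := by
    rw [← lintegral_union measurableSet_ball (ball_disjoint_ball (by linarith))]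
    exact lintegral_mono_set (union_subset (ball_subset_ball (by linarith)) hsub)
  refine le_trans ?_ hsum
  gcongr
  exact ENNReal.div_le_of_le_mul' (h.setLIntegral_ball_le_of_subset hψ hpos (by norm_num) hr hsub)

theorem A2Condition.tendsto_setLIntegral_ball_atTop (h : A2Condition μ C ψ)
    (hψ : AEMeasurable ψ μ) (hpos : ∀ᵐ x ∂μ, 0 < ψ x) (x : E) :
    Tendsto (fun r => ∫⁻ z in ball x r, ENNReal.ofReal (ψ z) ∂μ) atTop (𝓝 ⊤) := by
  set m := fun r => ∫⁻ z in ball x r, ENNReal.ofReal (ψ z) ∂μ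
  set δ := m 1 / (C * ENNReal.ofReal (3 ^ (2 * finrank ℝ E)))
  have hmono : Monotone m := fun r s hrs => lintegral_mono_set (ball_subset_ball hrs)
  have hδ : δ ≠ 0 := by
    refine ENNReal.div_ne_zero.2 ⟨lintegral_ofReal_ne_zero hψ.restrict (ae_restrict_of_ae hpos) ?_,
      ENNReal.mul_ne_top ENNReal.coe_ne_top ENNReal.ofReal_ne_top⟩
    rw [Ne, Measure.restrict_eq_zero]; exact (measure_ball_pos μ x one_pos).ne'
  have hstep : ∀ r, 1 ≤ r → m r + δ ≤ m (3 * r) := fun r hr =>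
    (add_le_add le_rfl (ENNReal.div_le_div_right (hmono (by linarith)) _)).trans
      (h.setLIntegral_ball_add_le hψ hpos x (by linarith))
  have hgrowth : ∀ k : ℕ, k * δ ≤ m (3 ^ k) := by
    intro k
    induction k with
    | zero => simp
    | succ k ih =>
      calc ((k + 1 : ℕ) : ℝ≥0∞) * δ = k * δ + δ := by push_cast; ring
        _ ≤ m (3 ^ k) + δ := by gcongr
        _ ≤ m (3 * 3 ^ k) := hstep _ (one_le_pow₀ (by norm_num))
        _ = m (3 ^ (k + 1)) := by rw [pow_succ']
  refine ENNReal.tendsto_nhds_top fun n => ?_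
  obtain ⟨k, hk⟩ := ENNReal.exists_nat_mul_gt hδ (ENNReal.natCast_ne_top n)
  filter_upwards [eventually_ge_atTop ((3 : ℝ) ^ k)] with r hr
  exact hk.trans_le ((hgrowth k).trans (hmono hr))

end A2Condition

theorem lintegral_Ioi_div_log_eq_top {f : ℝ → ℝ} {r₀ K : ℝ} {n : ℕ} (hr₀ : 1 ≤ r₀)
    (hf : ∀ r, r₀ ≤ r → 1 < f r) (hfK : ∀ r, r₀ ≤ r → f r ≤ K * r ^ n) :
    ∫⁻ r in Ioi r₀, ENNReal.ofReal (r / Real.log (f r)) = ⊤ := by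
  have hK : 0 < K := by nlinarith [hf r₀ le_rfl, hfK r₀ le_rfl, pow_pos (by linarith : 0 < r₀) n]
  have hlog : ∀ r, r₀ ≤ r → Real.log (f r) ≤ (K + n) * r := fun r hr => by
    have hr1 : 1 ≤ r := hr₀.trans hr
    calc Real.log (f r) ≤ Real.log (K * r ^ n) :=
          Real.log_le_log (by linarith [hf r hr]) (hfK r hr)
      _ = Real.log K + n * Real.log r := by
          rw [Real.log_mul hK.ne' (by positivity), Real.log_pow]
      _ ≤ K + n * r := by
          gcongr
          · linarith [Real.log_le_sub_one_of_pos hK]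
          · linarith [Real.log_le_sub_one_of_pos (by linarith : 0 < r)]
      _ ≤ (K + n) * r := by nlinarith
  refine eq_top_iff.2 ?_
  calc ⊤ = ∫⁻ _ in Ioi r₀, ENNReal.ofReal (K + n)⁻¹ := by
        rw [setLIntegral_const, Real.volume_Ioi, ENNReal.mul_top]
        exact (ENNReal.ofReal_pos.2 (by positivity)).ne'
    _ ≤ _ := setLIntegral_mono' measurableSet_Ioi fun r hr => by
        gcongr
        rw [le_div_iff₀ (Real.log_pos (hf r (le_of_lt hr))), inv_mul_le_iff₀ (by positivity)]
        exact hlog r (le_of_lt hr)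

theorem lintegral_Ioi_div_log_toReal_eq_top {m : ℝ → ℝ≥0∞} {r₀ : ℝ} {K : ℝ≥0∞} {n : ℕ}
    (hK : K ≠ ⊤) (hr₀ : 1 ≤ r₀) (hm : ∀ r, r₀ ≤ r → 1 < m r)
    (hmK : ∀ r, r₀ ≤ r → m r ≤ K * ENNReal.ofReal (r ^ n)) :
    ∫⁻ r in Ioi r₀, ENNReal.ofReal (r / Real.log (m r).toReal) = ⊤ := by
  have hfin : ∀ r, r₀ ≤ r → m r ≠ ⊤ := fun r hr =>
    ne_top_of_le_ne_top (ENNReal.mul_ne_top hK ENNReal.ofReal_ne_top) (hmK r hr)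
  refine lintegral_Ioi_div_log_eq_top hr₀ (K := K.toReal) (n := n) (fun r hr => ?_) fun r hr => ?_
  · exact (ENNReal.ofReal_lt_iff_lt_toReal zero_le_one (hfin r hr)).1 (by simpa using hm r hr)
  · have hr0 : 0 ≤ r := by linarith
    simpa [ENNReal.toReal_mul, ENNReal.toReal_ofReal (pow_nonneg hr0 n)] using
      ENNReal.toReal_mono (ENNReal.mul_ne_top hK ENNReal.ofReal_ne_top) (hmK r hr)

/-- Sturm's non-explosion integral test for an `A₂`-weighted measure:
there is `r₀ ≥ 1` with `∫_{B_r} ψ dx > 1` for `r ≥ r₀` and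
`∫_{r₀}^∞ r / log(ψdx(B_r)) dr = ∞` (proof of Proposition 2.3). -/
theorem a2_sturm_test (d : ℕ) (hd : 1 ≤ d)
    (ψ : EuclideanSpace ℝ (Fin d) → ℝ) (hψ : IsA2Weight d ψ) :
    ∃ r₀ : ℝ, 1 ≤ r₀ ∧
      (∀ r : ℝ, r₀ ≤ r →
        1 < (∫⁻ y in ball (0 : EuclideanSpace ℝ (Fin d)) r, ENNReal.ofReal (ψ y))) ∧
      (∫⁻ r in Set.Ioi r₀,
        ENNReal.ofReal (r / Real.log
          ((∫⁻ y in ball (0 : EuclideanSpace ℝ (Fin d)) r,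
              ENNReal.ofReal (ψ y)).toReal))) = ⊤ := by
  obtain ⟨hψm, hpos, A, -, hA⟩ := hψ
  have : Nonempty (Fin d) := ⟨⟨0, hd⟩⟩
  -- `ENNReal.ofReal A` is by definition `↑A.toNNReal`
  have hA2 : A2Condition volume A.toNNReal ψ := hA
  obtain ⟨r₁, hr₁⟩ := eventually_atTop.1 <|
    (hA2.tendsto_setLIntegral_ball_atTop hψm.aemeasurable hpos 0).eventually
      (lt_mem_nhds ENNReal.one_lt_top)
  have hgt : ∀ r, max r₁ 1 ≤ r →
      1 < ∫⁻ y in ball (0 : EuclideanSpace ℝ (Fin d)) r, ENNReal.ofReal (ψ y) :=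
    fun r hr => hr₁ r (le_of_max_le_left hr)
  refine ⟨max r₁ 1, le_max_right _ _, hgt, lintegral_Ioi_div_log_toReal_eq_top
    (n := 2 * finrank ℝ (EuclideanSpace ℝ (Fin d)))
    (ENNReal.mul_ne_top (ENNReal.coe_ne_top (r := A.toNNReal))
      (hA2.setLIntegral_ball_ne_top hψm.aemeasurable hpos 0 one_pos)) (le_max_right _ _) hgt
    fun r hr => ?_⟩
  have hr1 : 1 ≤ r := (le_max_right _ _).trans hr
  simpa only [mul_one, mul_right_comm] using hA2.setLIntegral_ball_le_of_subset hψm.aemeasurable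
    hpos (x := 0) (y := 0) (c := r) (by linarith) one_pos (ball_subset_ball (by linarith))
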